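/- Let m be a Bosbach state on a bounded pseudo-BCK algebra A. The following are equivalent: (a) m is a state-morphism; (b) m(a˜ → b⁻˜) = min{m(a) + m(b), 1} for all a,b ∈ A; (c) m(b⁻ ⤳ a˜⁻) = min{m(a) + m(b), 1} for all a,b ∈ A. -/
import Mathlib


universe u

class PseudoBCK (A : Type u) extends PartialOrder A where
  arr : A → A → A
  sarr : A → A → A
  one : A
  ax1  : ∀ x y z : A, arr x y ≤ sarr (arr y z) (arr x z)
  ax1' : ∀ x y z : A, sarr x y ≤ arr (sarr y z) (sarr x z)
  ax2  : ∀ x y : A, x ≤ sarr (arr x y) y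
  ax2' : ∀ x y : A, x ≤ arr (sarr x y) y
  ax4  : ∀ x : A, x ≤ one
  ax6  : ∀ x y : A, x ≤ y ↔ arr x y = one
  ax6' : ∀ x y : A, x ≤ y ↔ sarr x y = one

namespace PseudoBCK

variable {A : Type u} [PseudoBCK A]

/-- `x ∨₁ y = (x → y) ⤳ y`. -/
def sup1 (x y : A) : A := sarr (arr x y) y

/-- `x ∨₂ y = (x ⤳ y) → y`. -/
def sup2 (x y : A) : A := arr (sarr x y) y

end PseudoBCK

open PseudoBCK

class BoundedPseudoBCK (A : Type u) extends PseudoBCK A where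
  zero : A
  zero_le : ∀ x : A, zero ≤ x

namespace BoundedPseudoBCK

variable {A : Type u} [BoundedPseudoBCK A]

/-- `x⁻ = x → 0`. -/
def neg (x : A) : A := arr x zero

/-- `x˜ = x ⤳ 0`. -/
def tneg (x : A) : A := sarr x zero

end BoundedPseudoBCK

open BoundedPseudoBCK

/-- A Bosbach state on a bounded pseudo-BCK algebra. -/
def IsBosbachState (A : Type u) [BoundedPseudoBCK A] (s : A → ℝ) : Prop :=
  (∀ x : A, s x ∈ Set.Icc (0 : ℝ) 1) ∧
  s (zero : A) = 0 ∧ s (one : A) = 1 ∧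
  (∀ x y : A, s x + s (arr x y) = s y + s (arr y x)) ∧
  (∀ x y : A, s x + s (sarr x y) = s y + s (sarr y x))

/-- A state-morphism on a bounded pseudo-BCK algebra:
`m (x → y) = m (x ⤳ y) = min (1 - m x + m y) 1`. -/
def IsStateMorphism (A : Type u) [BoundedPseudoBCK A] (m : A → ℝ) : Prop :=
  (∀ x : A, m x ∈ Set.Icc (0 : ℝ) 1) ∧
  m (zero : A) = 0 ∧
  (∀ x y : A, m (arr x y) = min (1 - m x + m y) 1) ∧
  (∀ x y : A, m (sarr x y) = min (1 - m x + m y) 1)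


section Aux

variable {A : Type u} [BoundedPseudoBCK A]

lemma arr_eq_one' {x y : A} (h : x ≤ y) : arr x y = one := (PseudoBCK.ax6 x y).mp h
lemma sarr_eq_one' {x y : A} (h : x ≤ y) : sarr x y = one := (PseudoBCK.ax6' x y).mp h

lemma le_of_one_le_sarr {x y : A} (h : (one : A) ≤ sarr x y) : x ≤ y :=
  (PseudoBCK.ax6' x y).mpr (le_antisymm (PseudoBCK.ax4 _) h)

lemma le_of_one_le_arr {x y : A} (h : (one : A) ≤ arr x y) : x ≤ y :=
  (PseudoBCK.ax6 x y).mpr (le_antisymm (PseudoBCK.ax4 _) h)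

lemma arr_one_left (y : A) : arr (one : A) y = y := by
  apply le_antisymm
  · exact le_of_one_le_sarr (PseudoBCK.ax2 one y)
  · have h := PseudoBCK.ax2' y y
    rwa [sarr_eq_one' (le_refl y)] at h

lemma sarr_one_left (y : A) : sarr (one : A) y = y := by
  apply le_antisymm
  · exact le_of_one_le_arr (PseudoBCK.ax2' one y)
  · have h := PseudoBCK.ax2 y y
    rwa [arr_eq_one' (le_refl y)] at h

lemma arr_antitone' {u v : A} (h : u ≤ v) (w : A) : arr v w ≤ arr u w := by
  have h1 := PseudoBCK.ax1 u v w
  rw [arr_eq_one' h] at h1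
  exact le_of_one_le_sarr h1

lemma sarr_antitone' {u v : A} (h : u ≤ v) (w : A) : sarr v w ≤ sarr u w := by
  have h1 := PseudoBCK.ax1' u v w
  rw [sarr_eq_one' h] at h1
  exact le_of_one_le_arr h1

lemma le_tneg_neg (x : A) : x ≤ tneg (neg x) := PseudoBCK.ax2 x zero
lemma le_neg_tneg (x : A) : x ≤ neg (tneg x) := PseudoBCK.ax2' x zero

lemma arr_le_sarr_neg (x y : A) : arr x y ≤ sarr (neg y) (neg x) := PseudoBCK.ax1 x y zero
lemma sarr_le_arr_tneg (x y : A) : sarr x y ≤ arr (tneg y) (tneg x) := PseudoBCK.ax1' x y zero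

section StateLemmas

variable {m : A → ℝ} (hm : IsBosbachState A m)
include hm

lemma m_arr_of_le {x y : A} (h : x ≤ y) : m (arr y x) = 1 - m y + m x := by
  have hb := hm.2.2.2.1 x y
  rw [arr_eq_one' h, hm.2.2.1] at hb
  linarith

lemma m_sarr_of_le {x y : A} (h : x ≤ y) : m (sarr y x) = 1 - m y + m x := by
  have hb := hm.2.2.2.2 x y
  rw [sarr_eq_one' h, hm.2.2.1] at hb
  linarith

lemma m_mono {x y : A} (h : x ≤ y) : m x ≤ m y := by
  have h1 := m_arr_of_le hm h
  have h2 := (hm.1 (arr y x)).2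
  linarith

lemma m_neg (x : A) : m (neg x) = 1 - m x := by
  have h := m_arr_of_le hm (BoundedPseudoBCK.zero_le x)
  rw [hm.2.1] at h
  show m (arr x zero) = 1 - m x
  linarith

lemma m_tneg (x : A) : m (tneg x) = 1 - m x := by
  have h := m_sarr_of_le hm (BoundedPseudoBCK.zero_le x)
  rw [hm.2.1] at h
  show m (sarr x zero) = 1 - m x
  linarith

lemma m_tneg_neg (x : A) : m (tneg (neg x)) = m x := by
  rw [m_tneg hm, m_neg hm]; ring

lemma m_neg_tneg (x : A) : m (neg (tneg x)) = m x := by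
  rw [m_neg hm, m_tneg hm]; ring

lemma m_arr_le (x y : A) : m (arr x y) ≤ min (1 - m x + m y) 1 := by
  have hb := hm.2.2.2.1 x y
  have h1 := (hm.1 (arr y x)).2
  have h2 := (hm.1 (arr x y)).2
  exact le_min (by linarith) h2

lemma m_sarr_le (x y : A) : m (sarr x y) ≤ min (1 - m x + m y) 1 := by
  have hb := hm.2.2.2.2 x y
  have h1 := (hm.1 (sarr y x)).2
  have h2 := (hm.1 (sarr x y)).2
  exact le_min (by linarith) h2

lemma m_sarr_le_of_m_one {p q : A} (hp : m p = 1) : m (sarr p q) ≤ m q := by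
  have hb := hm.2.2.2.2 p q
  have h1 := (hm.1 (sarr q p)).2
  linarith

lemma m_arr_le_of_m_one {p q : A} (hp : m p = 1) : m (arr p q) ≤ m q := by
  have hb := hm.2.2.2.1 p q
  have h1 := (hm.1 (arr q p)).2
  linarith

lemma b_arr (hb : ∀ a b : A, m (arr (tneg a) (tneg (neg b))) = min (m a + m b) 1)
    (u v : A) : m (arr u v) = min (1 - m u + m v) 1 := by
  have h1 : m (arr (tneg (neg u)) (tneg (neg v))) = min (1 - m u + m v) 1 := by
    have h := hb (neg u) v
    rwa [m_neg hm u] at h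
  have h2 : arr (tneg (neg u)) (tneg (neg v)) ≤ arr u (tneg (neg v)) :=
    arr_antitone' (le_tneg_neg u) _
  have h3 : arr u (tneg (neg v)) ≤ sarr (arr (tneg (neg v)) v) (arr u v) :=
    PseudoBCK.ax1 u _ v
  have h4 : m (arr (tneg (neg v)) v) = 1 := by
    rw [m_arr_of_le hm (le_tneg_neg v), m_tneg_neg hm v]; ring
  have h5 : m (sarr (arr (tneg (neg v)) v) (arr u v)) ≤ m (arr u v) :=
    m_sarr_le_of_m_one hm h4
  have hchain := (m_mono hm h2).trans ((m_mono hm h3).trans h5)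
  exact le_antisymm (m_arr_le hm u v) (h1 ▸ hchain)

lemma b_sarr (harr : ∀ p q : A, m (arr p q) = min (1 - m p + m q) 1)
    (u v : A) : m (sarr u v) = min (1 - m u + m v) 1 := by
  have h1 : m (arr (tneg v) (tneg u)) = min (1 - m u + m v) 1 := by
    rw [harr, m_tneg hm, m_tneg hm]
    congr 1; ring
  have h2 : arr (tneg v) (tneg u) ≤ sarr (neg (tneg u)) (neg (tneg v)) :=
    arr_le_sarr_neg _ _
  have h3 : sarr (neg (tneg u)) (neg (tneg v)) ≤ sarr u (neg (tneg v)) :=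
    sarr_antitone' (le_neg_tneg u) _
  have h4 : sarr u (neg (tneg v)) ≤ arr (sarr (neg (tneg v)) v) (sarr u v) :=
    PseudoBCK.ax1' u _ v
  have h5 : m (sarr (neg (tneg v)) v) = 1 := by
    rw [m_sarr_of_le hm (le_neg_tneg v), m_neg_tneg hm v]; ring
  have h6 : m (arr (sarr (neg (tneg v)) v) (sarr u v)) ≤ m (sarr u v) :=
    m_arr_le_of_m_one hm h5
  have hchain := (m_mono hm h2).trans ((m_mono hm h3).trans ((m_mono hm h4).trans h6))
  exact le_antisymm (m_sarr_le hm u v) (h1 ▸ hchain)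

lemma c_sarr (hc : ∀ a b : A, m (sarr (neg b) (neg (tneg a))) = min (m a + m b) 1)
    (u v : A) : m (sarr u v) = min (1 - m u + m v) 1 := by
  have h1 : m (sarr (neg (tneg u)) (neg (tneg v))) = min (1 - m u + m v) 1 := by
    rw [hc v (tneg u), m_tneg hm]
    congr 1; ring
  have h3 : sarr (neg (tneg u)) (neg (tneg v)) ≤ sarr u (neg (tneg v)) :=
    sarr_antitone' (le_neg_tneg u) _
  have h4 : sarr u (neg (tneg v)) ≤ arr (sarr (neg (tneg v)) v) (sarr u v) :=
    PseudoBCK.ax1' u _ v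
  have h5 : m (sarr (neg (tneg v)) v) = 1 := by
    rw [m_sarr_of_le hm (le_neg_tneg v), m_neg_tneg hm v]; ring
  have h6 : m (arr (sarr (neg (tneg v)) v) (sarr u v)) ≤ m (sarr u v) :=
    m_arr_le_of_m_one hm h5
  have hchain := (m_mono hm h3).trans ((m_mono hm h4).trans h6)
  exact le_antisymm (m_sarr_le hm u v) (h1 ▸ hchain)

lemma c_arr (hsarr : ∀ p q : A, m (sarr p q) = min (1 - m p + m q) 1)
    (u v : A) : m (arr u v) = min (1 - m u + m v) 1 := by
  have h1 : m (sarr (neg v) (neg u)) = min (1 - m u + m v) 1 := by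
    rw [hsarr, m_neg hm, m_neg hm]
    congr 1; ring
  have h2 : sarr (neg v) (neg u) ≤ arr (tneg (neg u)) (tneg (neg v)) :=
    sarr_le_arr_tneg _ _
  have h3 : arr (tneg (neg u)) (tneg (neg v)) ≤ arr u (tneg (neg v)) :=
    arr_antitone' (le_tneg_neg u) _
  have h4 : arr u (tneg (neg v)) ≤ sarr (arr (tneg (neg v)) v) (arr u v) :=
    PseudoBCK.ax1 u _ v
  have h5 : m (arr (tneg (neg v)) v) = 1 := by
    rw [m_arr_of_le hm (le_tneg_neg v), m_tneg_neg hm v]; ring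
  have h6 : m (sarr (arr (tneg (neg v)) v) (arr u v)) ≤ m (arr u v) :=
    m_sarr_le_of_m_one hm h5
  have hchain := (m_mono hm h2).trans ((m_mono hm h3).trans ((m_mono hm h4).trans h6))
  exact le_antisymm (m_arr_le hm u v) (h1 ▸ hchain)

end StateLemmas

lemma morph_b {m : A → ℝ} (hs : IsStateMorphism A m) (a b : A) :
    m (arr (tneg a) (tneg (neg b))) = min (m a + m b) 1 := by
  obtain ⟨hI, h0, hA, hS⟩ := hs
  have ha0 := (hI a).1
  have hb0 := (hI b).1
  have hb1 := (hI b).2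
  have hta : m (tneg a) = 1 - m a := by
    show m (sarr a zero) = 1 - m a
    rw [hS a zero, h0, min_eq_left (by linarith)]; ring
  have hnb : m (neg b) = 1 - m b := by
    show m (arr b zero) = 1 - m b
    rw [hA b zero, h0, min_eq_left (by linarith)]; ring
  have htnb : m (tneg (neg b)) = m b := by
    show m (sarr (neg b) zero) = m b
    rw [hS (neg b) zero, h0, hnb, min_eq_left (by linarith)]; ring
  rw [hA, hta, htnb]
  congr 1; ring

lemma morph_c {m : A → ℝ} (hs : IsStateMorphism A m) (a b : A) :
    m (sarr (neg b) (neg (tneg a))) = min (m a + m b) 1 := by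
  obtain ⟨hI, h0, hA, hS⟩ := hs
  have ha0 := (hI a).1
  have ha1 := (hI a).2
  have hb0 := (hI b).1
  have hnb : m (neg b) = 1 - m b := by
    show m (arr b zero) = 1 - m b
    rw [hA b zero, h0, min_eq_left (by linarith)]; ring
  have hta : m (tneg a) = 1 - m a := by
    show m (sarr a zero) = 1 - m a
    rw [hS a zero, h0, min_eq_left (by linarith)]; ring
  have hnta : m (neg (tneg a)) = m a := by
    show m (arr (tneg a) zero) = m a
    rw [hA (tneg a) zero, h0, hta, min_eq_left (by linarith)]; ring
  rw [hS, hnb, hnta]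
  congr 1; ring

end Aux

theorem stmt_9 {A : Type u} [BoundedPseudoBCK A] (m : A → ℝ)
    (hm : IsBosbachState A m) :
    (IsStateMorphism A m ↔
      ∀ a b : A, m (arr (tneg a) (tneg (neg b))) = min (m a + m b) 1) ∧
    (IsStateMorphism A m ↔
      ∀ a b : A, m (sarr (neg b) (neg (tneg a))) = min (m a + m b) 1) := by
  constructor
  · constructor
    · intro hs
      exact morph_b hs
    · intro hb
      exact ⟨hm.1, hm.2.1, b_arr hm hb, b_sarr hm (b_arr hm hb)⟩
  · constructor
    · intro hs
      exact morph_c hs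
    · intro hc
      exact ⟨hm.1, hm.2.1, c_arr hm (c_sarr hm hc), c_sarr hm hc⟩
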